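/- arXiv:0802.2996 — 3 statements merged into one kernel-verified Lean document; each statement's English description precedes it below -/
import Mathlib

section
/- In the Thompson group T presented by generators α, β with relations α⁴ = 1, β³ = 1, (βα)⁵ = 1, [βαβ, α²βαβα²] = 1, and [βαβ, α²β²α²βαβα²βα²] = 1, the elements A = βα², B = β²α, C = β² satisfy the Thompson group relations [AB⁻¹, A⁻¹BA] = 1 and [AB⁻¹, A⁻²BA²] = 1. -/
/-!
With `A = βα²` and `B = β²α`, the relations `α⁴ = β³ = 1` alone give
`AB⁻¹ = βαβ`, `A⁻¹BA = α²βαβα²` and `A⁻²BA² = α²β²α²βαβα²βα²`, so the two relations of `F`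
are, word for word, the two commutator relators in the presentation of `T`.
-/

namespace Stmt0

open scoped commutatorElement

/-- The generator `α` in the free group. -/
def ga : FreeGroup (Fin 2) := FreeGroup.of 0
/-- The generator `β` in the free group. -/
def gb : FreeGroup (Fin 2) := FreeGroup.of 1

/-- Relations of the Ptolemy-Thompson group `T`. -/
def Trels : Set (FreeGroup (Fin 2)) :=
  {ga ^ 4, gb ^ 3, (gb * ga) ^ 5,
   ⁅gb * ga * gb, ga ^ 2 * gb * ga * gb * ga ^ 2⁆,
   ⁅gb * ga * gb, ga ^ 2 * gb ^ 2 * ga ^ 2 * gb * ga * gb * ga ^ 2 * gb * ga ^ 2⁆}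

/-- The Ptolemy-Thompson group `T`. -/
abbrev T := PresentedGroup Trels

section

variable {G : Type*} [Group G] {a b : G}

lemma inv_pow_eq_pow_of_pow_add_eq_one {m n : ℕ} (h : a ^ (m + n) = 1) : (a ^ m)⁻¹ = a ^ n :=
  inv_eq_of_mul_eq_one_right (by rw [← pow_add, h])

lemma mul_sq_mul_inv_sq_mul (hb : b ^ 3 = 1) : b * a ^ 2 * (b ^ 2 * a)⁻¹ = b * a * b := by
  calc b * a ^ 2 * (b ^ 2 * a)⁻¹ = b * a * (b ^ 2)⁻¹ := by group
    _ = b * a * b := by rw [inv_pow_eq_pow_of_pow_add_eq_one (m := 2) (n := 1) hb, pow_one]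

lemma conj_sq_mul_by_mul_sq (ha : a ^ 4 = 1) :
    (b * a ^ 2)⁻¹ * (b ^ 2 * a) * (b * a ^ 2) = a ^ 2 * b * a * b * a ^ 2 := by
  calc (b * a ^ 2)⁻¹ * (b ^ 2 * a) * (b * a ^ 2) = (a ^ 2)⁻¹ * b * a * b * a ^ 2 := by group
    _ = a ^ 2 * b * a * b * a ^ 2 := by rw [inv_pow_eq_pow_of_pow_add_eq_one (m := 2) (n := 2) ha]

lemma conj_sq_mul_by_mul_sq_sq (ha : a ^ 4 = 1) (hb : b ^ 3 = 1) :
    (b * a ^ 2)⁻¹ ^ 2 * (b ^ 2 * a) * (b * a ^ 2) ^ 2 =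
      a ^ 2 * b ^ 2 * a ^ 2 * b * a * b * a ^ 2 * b * a ^ 2 := by
  calc (b * a ^ 2)⁻¹ ^ 2 * (b ^ 2 * a) * (b * a ^ 2) ^ 2
        = (a ^ 2)⁻¹ * (b ^ 1)⁻¹ * (a ^ 2)⁻¹ * b * a * b * a ^ 2 * b * a ^ 2 := by
          rw [sq (b * a ^ 2)⁻¹, sq (b * a ^ 2)]; group
    _ = a ^ 2 * b ^ 2 * a ^ 2 * b * a * b * a ^ 2 * b * a ^ 2 := by
      rw [inv_pow_eq_pow_of_pow_add_eq_one (m := 2) (n := 2) ha,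
        inv_pow_eq_pow_of_pow_add_eq_one (m := 1) (n := 2) hb]

lemma thompsonF_relations_of_thompsonT_relations (ha : a ^ 4 = 1) (hb : b ^ 3 = 1)
    (h₁ : ⁅b * a * b, a ^ 2 * b * a * b * a ^ 2⁆ = 1)
    (h₂ : ⁅b * a * b, a ^ 2 * b ^ 2 * a ^ 2 * b * a * b * a ^ 2 * b * a ^ 2⁆ = 1) :
    ⁅b * a ^ 2 * (b ^ 2 * a)⁻¹, (b * a ^ 2)⁻¹ * (b ^ 2 * a) * (b * a ^ 2)⁆ = 1 ∧
      ⁅b * a ^ 2 * (b ^ 2 * a)⁻¹, (b * a ^ 2)⁻¹ ^ 2 * (b ^ 2 * a) * (b * a ^ 2) ^ 2⁆ = 1 := by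
  rw [mul_sq_mul_inv_sq_mul hb, conj_sq_mul_by_mul_sq ha, conj_sq_mul_by_mul_sq_sq ha hb]
  exact ⟨h₁, h₂⟩

end

lemma mk_ga : PresentedGroup.mk Trels ga = PresentedGroup.of 0 := rfl

lemma mk_gb : PresentedGroup.mk Trels gb = PresentedGroup.of 1 := rfl

lemma of_zero_pow_four : (PresentedGroup.of 0 : T) ^ 4 = 1 := by
  simpa only [map_pow, mk_ga] using PresentedGroup.one_of_mem (show ga ^ 4 ∈ Trels by simp [Trels])

lemma of_one_pow_three : (PresentedGroup.of 1 : T) ^ 3 = 1 := by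
  simpa only [map_pow, mk_gb] using PresentedGroup.one_of_mem (show gb ^ 3 ∈ Trels by simp [Trels])

lemma commutator_relation₁ :
    let α : T := PresentedGroup.of 0
    let β : T := PresentedGroup.of 1
    ⁅β * α * β, α ^ 2 * β * α * β * α ^ 2⁆ = 1 := by
  simpa only [map_commutatorElement, map_mul, map_pow, mk_ga, mk_gb] using
    PresentedGroup.one_of_mem
      (show ⁅gb * ga * gb, ga ^ 2 * gb * ga * gb * ga ^ 2⁆ ∈ Trels by simp [Trels])

lemma commutator_relation₂ :
    let α : T := PresentedGroup.of 0
    let β : T := PresentedGroup.of 1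
    ⁅β * α * β, α ^ 2 * β ^ 2 * α ^ 2 * β * α * β * α ^ 2 * β * α ^ 2⁆ = 1 := by
  simpa only [map_commutatorElement, map_mul, map_pow, mk_ga, mk_gb] using
    PresentedGroup.one_of_mem (show ⁅gb * ga * gb,
      ga ^ 2 * gb ^ 2 * ga ^ 2 * gb * ga * gb * ga ^ 2 * gb * ga ^ 2⁆ ∈ Trels by simp [Trels])

theorem thompson_F_relations_hold :
    let α : T := PresentedGroup.of 0
    let β : T := PresentedGroup.of 1
    let A : T := β * α ^ 2
    let B : T := β ^ 2 * α
    ⁅A * B⁻¹, A⁻¹ * B * A⁆ = 1 ∧ ⁅A * B⁻¹, A⁻¹ ^ 2 * B * A ^ 2⁆ = 1 :=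
  thompsonF_relations_of_thompsonT_relations of_zero_pow_four of_one_pow_three
    commutator_relation₁ commutator_relation₂

end Stmt0
end

section
/- For integers n, p, q and n', p', q', the map sending α̃ ↦ α̃zˣ and β̃ ↦ β̃z^y, fixing z, extends to an isomorphism of central extensions T_{n,p,q} ≅ T_{n',p',q'} (inducing the identity on T and on the center) if and only if there exist integers x, y with n = n' + 5x + 5y, p = p' + 4x, q = q' + 3y. -/
/-!
Substituting `α̃ z^x, β̃ z^y` for `α̃, β̃` with `z` central leaves the commutator relations
unchanged and multiplies the three power relations by `z^(5x+5y)`, `z^(4x)`, `z^(3y)`. This gives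
the isomorphism when the parameters match. Conversely, given such an isomorphism, the elements
`α̃ z^x, β̃ z^y, z` of `T_{n',p',q'}` satisfy the relations both of `T_{n,p,q}` and of
`T_{n'+5x+5y, p'+4x, q'+3y}`, so the parameters agree as soon as `z` has infinite order.

To see that `z` has infinite order, let `T` act on a binary model of `ℝ`, in which a carry into the
integer part is counted with an arbitrary integer weight `c`, and twist the generators by
translations `s`, `t`: this represents `T_{3c+5s+5t, c+4s, c+3t}` with `z` acting as a unit
translation, and every `(n, p, q)` has this form with `c = 12n - 15p - 20q`.
-/

namespace Stmt2

open scoped commutatorElement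

def ga : FreeGroup (Fin 3) := FreeGroup.of 0
def gb : FreeGroup (Fin 3) := FreeGroup.of 1
def gz : FreeGroup (Fin 3) := FreeGroup.of 2

/-- Relations of the central extension `T_{n,p,q}` of the Ptolemy-Thompson group `T`. -/
def Trels (n p q : ℤ) : Set (FreeGroup (Fin 3)) :=
  {(gb * ga) ^ 5 * gz ^ (-n), ga ^ 4 * gz ^ (-p), gb ^ 3 * gz ^ (-q),
   ⁅gb * ga * gb, ga ^ 2 * gb * ga * gb * ga ^ 2⁆,
   ⁅gb * ga * gb, ga ^ 2 * gb * ga ^ 2 * gb * ga * gb * ga ^ 2 * gb ^ 2 * ga ^ 2⁆,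
   ⁅ga, gz⁆, ⁅gb, gz⁆}

/-- The group `T_{n,p,q}`. -/
abbrev Tnpq (n p q : ℤ) := PresentedGroup (Trels n p q)

section Relations

variable {G H : Type*} [Group G] [Group H] {n p q n' p' q' : ℤ} {a b z : G}

structure SatisfiesTrels (n p q : ℤ) (a b z : G) : Prop where
  ba_pow_five : (b * a) ^ 5 = z ^ n
  a_pow_four : a ^ 4 = z ^ p
  b_pow_three : b ^ 3 = z ^ q
  commutator_eq_one : ⁅b * a * b, a ^ 2 * b * a * b * a ^ 2⁆ = 1
  commutator_eq_one' : ⁅b * a * b, a ^ 2 * b * a ^ 2 * b * a * b * a ^ 2 * b ^ 2 * a ^ 2⁆ = 1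
  commute_a : Commute a z
  commute_b : Commute b z

theorem satisfiesTrels_iff :
    SatisfiesTrels n p q a b z ↔ ∀ r ∈ Trels n p q, FreeGroup.lift ![a, b, z] r = 1 := by
  simp only [Trels, ga, gb, gz, Fin.isValue, zpow_neg, Set.mem_insert_iff, Set.mem_singleton_iff,
    forall_eq_or_imp, forall_eq, map_mul, map_pow, map_inv, map_zpow, map_commutatorElement,
    FreeGroup.lift_apply_of, Matrix.cons_val_zero, Matrix.cons_val_one, Matrix.cons_val,
    mul_inv_eq_one]
  exact ⟨fun ⟨h₁, h₂, h₃, h₄, h₅, h₆, h₇⟩ => ⟨h₁, h₂, h₃, h₄, h₅,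
      commutatorElement_eq_one_iff_commute.mpr h₆, commutatorElement_eq_one_iff_commute.mpr h₇⟩,
    fun ⟨h₁, h₂, h₃, h₄, h₅, h₆, h₇⟩ => ⟨h₁, h₂, h₃, h₄, h₅,
      commutatorElement_eq_one_iff_commute.mp h₆, commutatorElement_eq_one_iff_commute.mp h₇⟩⟩

theorem SatisfiesTrels.map (h : SatisfiesTrels n p q a b z) (f : G →* H) :
    SatisfiesTrels n p q (f a) (f b) (f z) where
  ba_pow_five := by simpa only [map_mul, map_pow, map_zpow] using congrArg f h.ba_pow_five
  a_pow_four := by simpa only [map_pow, map_zpow] using congrArg f h.a_pow_four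
  b_pow_three := by simpa only [map_pow, map_zpow] using congrArg f h.b_pow_three
  commutator_eq_one := by
    simpa only [map_commutatorElement, map_mul, map_pow, map_one] using
      congrArg f h.commutator_eq_one
  commutator_eq_one' := by
    simpa only [map_commutatorElement, map_mul, map_pow, map_one] using
      congrArg f h.commutator_eq_one'
  commute_a := h.commute_a.map f
  commute_b := h.commute_b.map f

theorem SatisfiesTrels.eq_of_not_isOfFinOrder (h : SatisfiesTrels n p q a b z)
    (h' : SatisfiesTrels n' p' q' a b z) (hz : ¬IsOfFinOrder z) : n = n' ∧ p = p' ∧ q = q' :=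
  have hinj := injective_zpow_iff_not_isOfFinOrder.mpr hz
  ⟨hinj (h.ba_pow_five.symm.trans h'.ba_pow_five), hinj (h.a_pow_four.symm.trans h'.a_pow_four),
    hinj (h.b_pow_three.symm.trans h'.b_pow_three)⟩

theorem mul_zpow_mul_mul_zpow (hz : ∀ g : G, Commute z g) (u v : G) (k l : ℤ) :
    u * z ^ k * (v * z ^ l) = u * v * z ^ (k + l) := by
  rw [mul_assoc u, ← mul_assoc (z ^ k), ((hz v).zpow_left k).eq, mul_assoc v, ← zpow_add,
    ← mul_assoc]

theorem mul_zpow_pow (hz : ∀ g : G, Commute z g) (u : G) (k : ℤ) (j : ℕ) :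
    (u * z ^ k) ^ j = u ^ j * z ^ (k * j) := by
  rw [((hz u).zpow_left k).symm.mul_pow, ← zpow_natCast (z ^ k), ← zpow_mul]

theorem commutatorElement_mul_of_forall_commute {c : G} (hc : ∀ g : G, Commute c g) (u v : G) :
    ⁅u * c, v⁆ = ⁅u, v⁆ := by
  rw [commutatorElement_def, commutatorElement_def, mul_assoc u, (hc v).eq]
  group

theorem commutatorElement_mul_zpow (hz : ∀ g : G, Commute z g) (u v : G) (k l : ℤ) :
    ⁅u * z ^ k, v * z ^ l⁆ = ⁅u, v⁆ := by
  have hc (k : ℤ) (g : G) : Commute (z ^ k) g := (hz g).zpow_left k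
  rw [commutatorElement_mul_of_forall_commute (hc k), ← commutatorElement_inv,
    commutatorElement_mul_of_forall_commute (hc l), commutatorElement_inv]

theorem SatisfiesTrels.shift (hz : ∀ g : G, Commute z g) (h : SatisfiesTrels n p q a b z)
    {x y : ℤ} (hn : n' = n + 5 * x + 5 * y) (hp : p' = p + 4 * x) (hq : q' = q + 3 * y) :
    SatisfiesTrels n' p' q' (a * z ^ x) (b * z ^ y) z := by
  subst hn hp hq
  refine ⟨?_, ?_, ?_, ?_, ?_, (hz _).symm, (hz _).symm⟩
  · rw [mul_zpow_mul_mul_zpow hz, mul_zpow_pow hz, h.ba_pow_five, ← zpow_add]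
    congr 1; push_cast; ring
  · rw [mul_zpow_pow hz, h.a_pow_four, ← zpow_add]
    congr 1; push_cast; ring
  · rw [mul_zpow_pow hz, h.b_pow_three, ← zpow_add]
    congr 1; push_cast; ring
  · simpa only [mul_zpow_pow hz, mul_zpow_mul_mul_zpow hz, commutatorElement_mul_zpow hz] using
      h.commutator_eq_one
  · simpa only [mul_zpow_pow hz, mul_zpow_mul_mul_zpow hz, commutatorElement_mul_zpow hz] using
      h.commutator_eq_one'

end Relations

theorem _root_.Function.Bijective.of_iterate {α : Type*} {f : α → α} {n : ℕ} (hn : n ≠ 0)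
    (h : (f^[n]).Bijective) : f.Bijective := by
  obtain ⟨k, rfl⟩ := Nat.exists_eq_succ_of_ne_zero hn
  exact ⟨(Function.iterate_succ f k ▸ h.1).of_comp, (Function.iterate_succ' f k ▸ h.2).of_comp⟩

namespace DyadicLine

open scoped Stream'

/- A pair `(m, b)` stands for the real number `m + 0.b₀b₁b₂…`. For `c = 1`, `s = t = 0` these are
the lifts to `ℝ` of the generators of `T` acting on `ℝ/ℤ`: `alphaLift` adds `1/4`, and `betaLift`
maps `[0, 1/2)`, `[1/2, 3/4)`, `[3/4, 1)` affinely onto `[1/2, 3/4)`, `[3/4, 1)`, `[1, 3/2)`.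
In general a carry into the integer part counts `c`, and `s`, `t` are extra translations. -/
def alphaLift (c s : ℤ) (x : ℤ × Stream' Bool) : ℤ × Stream' Bool :=
  match x.2.head, x.2.tail.head with
  | false, false => (x.1 + s, false :: true :: x.2.tail.tail)
  | false, true => (x.1 + s, true :: false :: x.2.tail.tail)
  | true, false => (x.1 + s, true :: true :: x.2.tail.tail)
  | true, true => (x.1 + s + c, false :: false :: x.2.tail.tail)

def betaLift (c t : ℤ) (x : ℤ × Stream' Bool) : ℤ × Stream' Bool :=
  match x.2.head, x.2.tail.head with
  | false, _ => (x.1 + t, true :: x.2)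
  | true, false => (x.1 + t, true :: true :: x.2.tail.tail)
  | true, true => (x.1 + t + c, false :: x.2.tail.tail)

def translation : Equiv.Perm (ℤ × Stream' Bool) := (Equiv.addRight 1).prodCongr (Equiv.refl _)

theorem translation_apply (x : ℤ × Stream' Bool) : translation x = (x.1 + 1, x.2) := rfl

theorem translation_inv_apply (x : ℤ × Stream' Bool) : translation⁻¹ x = (x.1 - 1, x.2) := rfl

theorem translation_zpow_apply (k : ℤ) (x : ℤ × Stream' Bool) :
    (translation ^ k) x = (x.1 + k, x.2) := by
  induction k using Int.induction_on generalizing x with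
  | zero => simp
  | succ k ih =>
    rw [zpow_add_one, Equiv.Perm.mul_apply, translation_apply, ih, add_right_comm, add_assoc]
  | pred k ih =>
    rw [zpow_sub_one, Equiv.Perm.mul_apply, translation_inv_apply, ih, sub_add_eq_add_sub,
      add_sub_assoc]

theorem not_isOfFinOrder_translation : ¬IsOfFinOrder translation := by
  rw [isOfFinOrder_iff_zpow_eq_one]
  rintro ⟨k, hk, h⟩
  have := congrArg (fun σ => (σ (0, Stream'.const false)).1) h
  simp only [translation_zpow_apply, zero_add, Equiv.Perm.coe_one, id_eq] at this
  exact hk this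

-- Four leading binary digits determine every composite occurring below.
theorem funext_cons4 {f g : ℤ × Stream' Bool → ℤ × Stream' Bool}
    (h : ∀ m b₀ b₁ b₂ b₃ u, f (m, b₀ :: b₁ :: b₂ :: b₃ :: u) = g (m, b₀ :: b₁ :: b₂ :: b₃ :: u)) :
    f = g := by
  funext ⟨m, u⟩
  simpa only [Stream'.eta] using
    h m u.head u.tail.head u.tail.tail.head u.tail.tail.tail.head u.tail.tail.tail.tail

theorem alphaLift_iterate_four (c s : ℤ) :
    (alphaLift c s)^[4] = ⇑(translation ^ (c + 4 * s)) := by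
  refine funext_cons4 fun m b₀ b₁ b₂ b₃ u => ?_
  cases b₀ <;> cases b₁ <;> simp [alphaLift, translation_zpow_apply] <;> ring

theorem betaLift_iterate_three (c t : ℤ) :
    (betaLift c t)^[3] = ⇑(translation ^ (c + 3 * t)) := by
  refine funext_cons4 fun m b₀ b₁ b₂ b₃ u => ?_
  cases b₀ <;> cases b₁ <;> cases b₂ <;> simp [betaLift, translation_zpow_apply] <;> ring

noncomputable def alphaPerm (c s : ℤ) : Equiv.Perm (ℤ × Stream' Bool) :=
  .ofBijective (alphaLift c s) <| .of_iterate four_ne_zero <|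
    alphaLift_iterate_four c s ▸ Equiv.bijective _

noncomputable def betaPerm (c t : ℤ) : Equiv.Perm (ℤ × Stream' Bool) :=
  .ofBijective (betaLift c t) <| .of_iterate three_ne_zero <|
    betaLift_iterate_three c t ▸ Equiv.bijective _

theorem satisfiesTrels_alphaPerm_betaPerm {n p q : ℤ} (c s t : ℤ) (hn : n = 3 * c + 5 * s + 5 * t)
    (hp : p = c + 4 * s) (hq : q = c + 3 * t) :
    SatisfiesTrels n p q (alphaPerm c s) (betaPerm c t) translation := by
  subst hn hp hq
  refine ⟨?_, Equiv.coe_fn_injective <| (Equiv.Perm.coe_pow _ _).trans (alphaLift_iterate_four c s),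
    Equiv.coe_fn_injective <| (Equiv.Perm.coe_pow _ _).trans (betaLift_iterate_three c t),
    commutatorElement_eq_one_iff_mul_comm.mpr ?_, commutatorElement_eq_one_iff_mul_comm.mpr ?_,
    ?_, ?_⟩
  all_goals
    refine Equiv.coe_fn_injective <| funext_cons4 fun m b₀ b₁ b₂ b₃ u => ?_
    cases b₀ <;> cases b₁ <;> cases b₂ <;> cases b₃ <;>
      simp [alphaPerm, betaPerm, alphaLift, betaLift, translation_apply, translation_zpow_apply,
        Equiv.Perm.coe_pow] <;> ring

end DyadicLine

namespace Tnpq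

open PresentedGroup

variable {n p q n' p' q' : ℤ} {G : Type*} [Group G] {a b z : G}

theorem satisfiesTrels_of : SatisfiesTrels n p q (of 0 : Tnpq n p q) (of 1) (of 2) := by
  refine satisfiesTrels_iff.mpr fun r hr => ?_
  have : FreeGroup.lift ![(of 0 : Tnpq n p q), of 1, of 2] = mk (Trels n p q) :=
    FreeGroup.ext_hom _ _ fun i => by fin_cases i <;> rfl
  rw [this]
  exact one_of_mem hr

def lift (h : SatisfiesTrels n p q a b z) : Tnpq n p q →* G :=
  toGroup (satisfiesTrels_iff.mp h)

@[simp] theorem lift_of_zero (h : SatisfiesTrels n p q a b z) : lift h (of 0) = a :=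
  toGroup.of _

@[simp] theorem lift_of_one (h : SatisfiesTrels n p q a b z) : lift h (of 1) = b :=
  toGroup.of _

@[simp] theorem lift_of_two (h : SatisfiesTrels n p q a b z) : lift h (of 2) = z :=
  toGroup.of _

theorem commute_of_two (g : Tnpq n p q) : Commute (of 2) g := by
  refine (Subgroup.mem_centralizer_singleton_iff.mp ?_).symm
  refine generated_by _ _ (fun i => Subgroup.mem_centralizer_singleton_iff.mpr ?_) g
  fin_cases i
  · exact satisfiesTrels_of.commute_a.eq
  · exact satisfiesTrels_of.commute_b.eq
  · rfl

def shiftHom (x y : ℤ) (hn : n = n' + 5 * x + 5 * y) (hp : p = p' + 4 * x) (hq : q = q' + 3 * y) :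
    Tnpq n p q →* Tnpq n' p' q' :=
  lift (satisfiesTrels_of.shift commute_of_two hn hp hq)

def shiftEquiv (x y : ℤ) (hn : n = n' + 5 * x + 5 * y) (hp : p = p' + 4 * x)
    (hq : q = q' + 3 * y) : Tnpq n p q ≃* Tnpq n' p' q' :=
  (shiftHom x y hn hp hq).toMulEquiv (shiftHom (-x) (-y) (by omega) (by omega) (by omega))
    (by ext i; fin_cases i <;> simp [shiftHom, mul_assoc])
    (by ext i; fin_cases i <;> simp [shiftHom, mul_assoc])

theorem not_isOfFinOrder_of_two : ¬IsOfFinOrder (of 2 : Tnpq n p q) := by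
  have hmodel := DyadicLine.satisfiesTrels_alphaPerm_betaPerm (n := n) (p := p) (q := q)
    (12 * n - 15 * p - 20 * q) (4 * p + 5 * q - 3 * n) (5 * p + 7 * q - 4 * n)
    (by ring) (by ring) (by ring)
  intro h
  exact DyadicLine.not_isOfFinOrder_translation (lift_of_two hmodel ▸ (lift hmodel).isOfFinOrder h)

end Tnpq

/-- There is an isomorphism of central extensions `T_{n,p,q} ≅ T_{n',p',q'}` sending
`z ↦ z`, `α̃ ↦ α̃ z^x`, `β̃ ↦ β̃ z^y` (hence fixing `z` and inducing the identity on the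
quotient `T`) if and only if there exist integers `x, y` with
`n = n' + 5x + 5y`, `p = p' + 4x`, `q = q' + 3y`. -/
theorem iso_of_central_extensions_iff (n p q n' p' q' : ℤ) :
    (∃ (x y : ℤ) (e : Tnpq n p q ≃* Tnpq n' p' q'),
        e (PresentedGroup.of 2) = PresentedGroup.of 2 ∧
        e (PresentedGroup.of 0) = PresentedGroup.of 0 * (PresentedGroup.of 2 : Tnpq n' p' q') ^ x ∧
        e (PresentedGroup.of 1) = PresentedGroup.of 1 * (PresentedGroup.of 2 : Tnpq n' p' q') ^ y)
    ↔ ∃ x y : ℤ, n = n' + 5 * x + 5 * y ∧ p = p' + 4 * x ∧ q = q' + 3 * y := by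
  constructor
  · rintro ⟨x, y, e, hz, ha, hb⟩
    have himage := Tnpq.satisfiesTrels_of.map e.toMonoidHom
    rw [MulEquiv.coe_toMonoidHom, ha, hb, hz] at himage
    have hshift : SatisfiesTrels (n' + 5 * x + 5 * y) (p' + 4 * x) (q' + 3 * y) _ _ _ :=
      Tnpq.satisfiesTrels_of.shift Tnpq.commute_of_two rfl rfl rfl
    exact ⟨x, y, himage.eq_of_not_isOfFinOrder hshift Tnpq.not_isOfFinOrder_of_two⟩
  · rintro ⟨x, y, hn, hp, hq⟩
    exact ⟨x, y, Tnpq.shiftEquiv x y hn hp hq, by simp [Tnpq.shiftEquiv, Tnpq.shiftHom]⟩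

end Stmt2
end

section
/- The classical coordinate change under a flip, β(x'_s) = x_s − ε_{se}·log(1 + exp(−sgn(ε_{se})·x_e)) for s ≠ e and β(x'_e) = −x_e, composed with itself (using the mutated matrix ε' with ε'_{se} = −ε_{se} for s ≠ e), is the identity; i.e., the flip coordinate transformation is an involution on ℝ^E. -/
namespace Stmt11

/-- The seed (cluster) mutation of the matrix `ε` in the direction `e`. -/
def mutate {E : Type*} [DecidableEq E] (ε : E → E → ℤ) (e : E) : E → E → ℤ :=
  fun s t =>
    if s = e ∨ t = e then -ε s t
    else if 0 < ε s e * ε e t then ε s t + |ε s e| * ε e t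
    else ε s t

/-- The classical coordinate change under a flip in the edge `e`:
`x'_e = −x_e` and `x'_s = x_s − ε_{se}·log(1 + exp(−sgn(ε_{se})·x_e))` for `s ≠ e`
(the correction term vanishes when `ε_{se} = 0`). -/
noncomputable def flip {E : Type*} [DecidableEq E] (ε : E → E → ℤ) (e : E)
    (x : E → ℝ) : E → ℝ :=
  fun s =>
    if s = e then -x e
    else x s - (ε s e : ℝ) * Real.log (1 + Real.exp (-((ε s e).sign : ℝ) * x e))

/-- The flip coordinate transformation is an involution on `ℝ^E`: the flip for the
mutated matrix composed with the flip for `ε` is the identity. -/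
theorem flip_involutive {E : Type*} [DecidableEq E] (ε : E → E → ℤ) (e : E)
    (hskew : ∀ s t, ε s t = -ε t s) (x : E → ℝ) :
    flip (mutate ε e) e (flip ε e x) = x := by
  funext s
  by_cases hs : s = e
  · subst hs; simp [flip]
  · simp only [flip, mutate, hs, if_neg hs, or_true, if_true, if_pos]
    rw [Int.sign_neg]
    push_cast
    ring_nf

end Stmt11
end
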